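/- Let G be a base network with elimination order π and let G^N be its N-world network with respect to a set R of roots, with variables eliminated from G^N in the order that replaces each π(i) by its duplicates π(i)^1,...,π(i)^N. Then for every variable X of G and every j ∈ {1,...,N}, the cluster of X^j satisfies C^N(X^j) ⊆ ⋃_{k=1}^N (C(X))^k, where C(X) is the cluster of X in the elimination process induced by π on G. -/

import Mathlib

namespace Counterfactual

attribute [local instance] Classical.propDecidable

noncomputable section

universe u v

variable {V : Type u}

variable {V : Type u}

/-- The directed graph given by edge relation `E` (`E p c` means `p` is a parent of `c`)
is acyclic, i.e. it is a DAG. -/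
def IsAcyclicRel (E : V → V → Prop) : Prop := ∀ x, ¬ Relation.TransGen E x x

/-- `x` is a root of the DAG `E`: it has no parents.  Non-roots are called internal. -/
def isRoot (E : V → V → Prop) (x : V) : Prop := ∀ p, ¬ E p x

/-- The family of variable `X` in the DAG `E`: `X` together with its parents. -/
def famOf (E : V → V → Prop) (X : V) : Set V := insert X {p | E p X}

/-- The moral graph of the DAG `E`: connect every pair of nodes having a common child,
then drop directions. -/
def moralGraph (E : V → V → Prop) : SimpleGraph V where
  Adj u w := u ≠ w ∧ (E u w ∨ E w u ∨ ∃ c, E u c ∧ E w c)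
  symm := by
    refine ⟨?_⟩
    intro u w h
    obtain ⟨h1, h2⟩ := h
    refine ⟨Ne.symm h1, ?_⟩
    rcases h2 with h | h | ⟨c, hc1, hc2⟩
    · exact Or.inr (Or.inl h)
    · exact Or.inl h
    · exact Or.inr (Or.inr ⟨c, hc2, hc1⟩)
  loopless := by
    refine ⟨?_⟩
    intro u h
    exact h.1 rfl

/-- Eliminating vertex `x` from an undirected graph: pairwise connect the neighbors
of `x`, then remove (isolate) `x`. -/
def eliminate (G : SimpleGraph V) (x : V) : SimpleGraph V where
  Adj u w := u ≠ w ∧ u ≠ x ∧ w ≠ x ∧ (G.Adj u w ∨ (G.Adj u x ∧ G.Adj x w))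
  symm := by
    refine ⟨?_⟩
    intro u w h
    obtain ⟨h1, h2, h3, h4⟩ := h
    refine ⟨Ne.symm h1, h3, h2, ?_⟩
    rcases h4 with h | ⟨ha, hb⟩
    · exact Or.inl h.symm
    · exact Or.inr ⟨hb.symm, ha.symm⟩
  loopless := by
    refine ⟨?_⟩
    intro u h
    exact h.1 rfl

/-- Eliminate a list of vertices, in order. -/
def elimList (G : SimpleGraph V) : List V → SimpleGraph V
  | [] => G
  | x :: xs => elimList (eliminate G x) xs

/-- The graph obtained from `G` after eliminating the first `i` variables of `π`. -/
def graphAt (G : SimpleGraph V) (π : List V) (i : ℕ) : SimpleGraph V :=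
  elimList G (π.take i)

/-- `x` together with its neighbors in the undirected graph `G`. -/
def closedNbhd (G : SimpleGraph V) (x : V) : Set V := insert x {y | G.Adj x y}

/-- An elimination order: a total ordering of all the variables. -/
def IsElimOrder (π : List V) : Prop := π.Nodup ∧ ∀ x : V, x ∈ π

/-- The cluster of variable `X` in the elimination process on the moral graph of `E`
induced by `π`: `X` together with its neighbors in the graph just before `X` is eliminated. -/
def clusterOf (E : V → V → Prop) (π : List V) (X : V) : Set V :=
  closedNbhd (graphAt (moralGraph E) π (π.idxOf X)) X

/-- The width of an elimination order: the size of its largest cluster minus one. -/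
def orderWidth (E : V → V → Prop) (π : List V) : ℕ :=
  sSup {n : ℕ | ∃ X ∈ π, n = (clusterOf E π X).ncard} - 1

/-- The treewidth of the DAG `E`: the minimum width attained by an elimination order. -/
def treewidthOf (E : V → V → Prop) : ℕ :=
  sInf {w : ℕ | ∃ π : List V, IsElimOrder π ∧ orderWidth E π = w}

/-! ### Twin networks -/

/-- The variables of the twin network of `E`: the base variables (`Sum.inl`) together
with a duplicate (`Sum.inr`) for every internal (non-root) variable. -/
abbrev TwinVar (E : V → V → Prop) : Type u := V ⊕ {x : V // ¬ isRoot E x}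

/-- The duplicate `X'` of a variable `X`; by convention `X' = X` when `X` is a root. -/
def twinDup (E : V → V → Prop) (x : V) : TwinVar E :=
  if h : isRoot E x then Sum.inl x else Sum.inr ⟨x, h⟩

/-- The edges of the twin network `G^t` of the base network `E`. -/
def twinEdge (E : V → V → Prop) (a b : TwinVar E) : Prop :=
  match a, b with
  | Sum.inl p, Sum.inl x => E p x
  | Sum.inl p, Sum.inr x => isRoot E p ∧ E p x.1
  | Sum.inr p, Sum.inr x => E p.1 x.1
  | Sum.inr _, Sum.inl _ => False

/-- The twin elimination order: replace each non-root variable `X` of `π`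
by the two consecutive variables `X, X'`. -/
def twinOrder (E : V → V → Prop) (π : List V) : List (TwinVar E) :=
  π.foldr (fun x acc =>
    (if h : isRoot E x then [Sum.inl x] else [Sum.inl x, Sum.inr ⟨x, h⟩]) ++ acc) []

/-- Eliminate the pair `{X, X'}` (a single variable when `X` is a root) from a graph
on the twin variables. -/
def elimTwinPair (E : V → V → Prop) (G : SimpleGraph (TwinVar E)) (x : V) :
    SimpleGraph (TwinVar E) :=
  if h : isRoot E x then eliminate G (Sum.inl x)
  else eliminate (eliminate G (Sum.inl x)) (Sum.inr ⟨x, h⟩)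

/-- The twin graph sequence: `twinGraphAt E π i` is the graph obtained from the moral graph
of the twin network after eliminating the pairs `{π 0, (π 0)'}, …` for the first `i`
variables of `π`. -/
def twinGraphAt (E : V → V → Prop) (π : List V) (i : ℕ) : SimpleGraph (TwinVar E) :=
  (π.take i).foldl (elimTwinPair E) (moralGraph (twinEdge E))

/-- The cluster of twin variable `Y` in the elimination process on the moral graph of the
twin network induced by the twin elimination order. -/
def twinClusterOf (E : V → V → Prop) (π : List V) (Y : TwinVar E) : Set (TwinVar E) :=
  clusterOf (twinEdge E) (twinOrder E π) Y

/-! ### Jointrees -/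

/-- A leaf of a tree: a node with exactly one neighbor. -/
def IsLeaf {J : Type v} (T : SimpleGraph J) (j : J) : Prop := ∃! k, T.Adj j k

/-- A jointree for the DAG `E`: a tree `T` together with a host function `H` mapping
(the index `X` of) each family of `E` to a nonempty set of hosting nodes; only leaves
may be hosts and each leaf hosts exactly one family. -/
structure Jointree (E : V → V → Prop) (J : Type v) where
  T : SimpleGraph J
  isTree : T.IsTree
  H : V → Set J
  hosts_nonempty : ∀ X : V, (H X).Nonempty
  hosts_leaf : ∀ (X : V) (j : J), j ∈ H X → IsLeaf T j
  leaf_host : ∀ j : J, IsLeaf T j → ∃! X : V, j ∈ H X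

variable {E : V → V → Prop} {J : Type v}

/-- The variables appearing (in a family hosted by a leaf) on the `i`-side of the
tree edge `(i, j)`. -/
def sideVars (jt : Jointree E J) (i j : J) : Set V :=
  {X | ∃ (Y : V) (l : J), l ∈ jt.H Y ∧ X ∈ famOf E Y ∧
    (jt.T.deleteEdges {s(i, j)}).Reachable i l}

/-- The separator of the tree edge `(i, j)`: the variables hosted on both sides. -/
def sepOf (jt : Jointree E J) (i j : J) : Set V :=
  sideVars jt i j ∩ sideVars jt j i

/-- The cluster of a jointree node: for a leaf, the family it hosts; for an internal
node, the union of the separators of its adjacent edges. -/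
def clusterJT (jt : Jointree E J) (i : J) : Set V :=
  if IsLeaf jt.T i then ⋃ X ∈ {Y : V | i ∈ jt.H Y}, famOf E X
  else ⋃ j ∈ {j : J | jt.T.Adj i j}, sepOf jt i j

/-- The width of a jointree: the size of its largest cluster minus one. -/
def widthJT (jt : Jointree E J) : ℕ := (⨆ i : J, (clusterJT jt i).ncard) - 1

/-- `l` is at or below `u` in the tree `T` rooted at `r`: `u` lies on every
(equivalently, on the unique) path from `r` to `l`. -/
def Below {J : Type v} (T : SimpleGraph J) (r u l : J) : Prop :=
  ∀ p : T.Walk r l, p.IsPath → u ∈ p.support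

/-- Node `u` of the jointree is duplicated by Algorithm 1 (with root `r`): every leaf at
or below `u` hosts only families of internal variables. -/
def Duplicated (jt : Jointree E J) (r u : J) : Prop :=
  ∀ l : J, IsLeaf jt.T l → Below jt.T r u l → ∀ X : V, l ∈ jt.H X → ¬ isRoot E X

/-- The nodes of the twin jointree produced by Algorithm 1: the original nodes
(`Sum.inl`) plus a duplicate (`Sum.inr`) of every duplicated node. -/
abbrev TwinJ (jt : Jointree E J) (r : J) := J ⊕ {u : J // Duplicated jt r u}

/-- Adjacency of the twin jointree produced by Algorithm 1: the original tree edges,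
the duplicates of the duplicated edges, and the edges attaching the roots of the
duplicate subtrees to the parents of the corresponding duplicated subtree roots. -/
def twinTAdj (jt : Jointree E J) (r : J) : TwinJ jt r → TwinJ jt r → Prop
  | Sum.inl i, Sum.inl j => jt.T.Adj i j
  | Sum.inl i, Sum.inr v => jt.T.Adj i v.1 ∧ ¬ Duplicated jt r i
  | Sum.inr u, Sum.inl j => jt.T.Adj u.1 j ∧ ¬ Duplicated jt r j
  | Sum.inr u, Sum.inr v => jt.T.Adj u.1 v.1

/-- The tree of the twin jointree produced by Algorithm 1. -/
def twinT (jt : Jointree E J) (r : J) : SimpleGraph (TwinJ jt r) where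
  Adj := twinTAdj jt r
  symm := by
    refine ⟨?_⟩
    rintro (i | u) (j | v) h <;> simp only [twinTAdj] at h ⊢
    · exact jt.T.adj_symm h
    · exact ⟨jt.T.adj_symm h.1, h.2⟩
    · exact ⟨jt.T.adj_symm h.1, h.2⟩
    · exact jt.T.adj_symm h
  loopless := by
    refine ⟨?_⟩
    rintro (i | u) h <;> simp only [twinTAdj] at h
    · exact jt.T.irrefl h
    · exact jt.T.irrefl h

/-- The host function of the twin jointree produced by Algorithm 1: a base family is
hosted by the original hosts of the corresponding base family, and a duplicate family is
hosted by the duplicates of the hosts of the corresponding base family. -/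
def twinH (jt : Jointree E J) (r : J) : TwinVar E → Set (TwinJ jt r) :=
  fun a =>
    match a with
    | Sum.inl X => Sum.inl '' jt.H X
    | Sum.inr x => {b | ∃ (l : J) (hl : Duplicated jt r l),
        l ∈ jt.H x.1 ∧ b = Sum.inr ⟨l, hl⟩}

/-- The copy of jointree node `i` on the duplicate side: its duplicate if `i` is
duplicated, and `i` itself otherwise. -/
def dupJ (jt : Jointree E J) (r i : J) : TwinJ jt r :=
  if h : Duplicated jt r i then Sum.inr ⟨i, h⟩ else Sum.inl i

/-! ### Thinning -/

/-- Thinning rule 1 for removing the functional variable `X` from the separator of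
edge `(i,j)`: the edge lies on a path between two leaves hosting the family of `X`,
and every separator on this path contains `X`. -/
def Rule1 (jt : Jointree E J) (S : J → J → Set V) (i j : J) (X : V) : Prop :=
  ∃ (l m : J) (p : jt.T.Walk l m), p.IsPath ∧ l ∈ jt.H X ∧ m ∈ jt.H X ∧
    s(i, j) ∈ p.edges ∧ ∀ a b : J, s(a, b) ∈ p.edges → X ∈ S a b

/-- Thinning rule 2 for removing the variable `X` from the separator of edge `(i,j)`:
no other separator adjacent to `i` contains `X`, or no other separator adjacent to `j`
contains `X`. -/
def Rule2 (jt : Jointree E J) (S : J → J → Set V) (i j : J) (X : V) : Prop :=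
  (∀ k : J, jt.T.Adj i k → k ≠ j → X ∉ S i k) ∨
  (∀ k : J, jt.T.Adj j k → k ≠ i → X ∉ S j k)

/-- One valid thinning step on a separator assignment: remove a functional
(here: internal, as in an SCM) variable `X` from the separator of an edge `(i,j)`,
as licensed by one of the two thinning rules. -/
def ThinStep (jt : Jointree E J) (S S' : J → J → Set V) : Prop :=
  ∃ (i j : J) (X : V), jt.T.Adj i j ∧ ¬ isRoot E X ∧ X ∈ S i j ∧
    (Rule1 jt S i j X ∨ Rule2 jt S i j X) ∧
    S' = fun a b => if (a = i ∧ b = j) ∨ (a = j ∧ b = i) then S a b \ {X} else S a b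

/-- `S` is the separator assignment of a thinned jointree obtained from `jt`:
it is reachable from the separators of `jt` by valid thinning steps, applied
to exhaustion. -/
def IsThinning (jt : Jointree E J) (S : J → J → Set V) : Prop :=
  Relation.ReflTransGen (ThinStep jt) (fun i j => sepOf jt i j) S ∧
    ∀ S', ¬ ThinStep jt S S'

/-- The cluster of a node of a thinned jointree with separator assignment `S`. -/
def thClusterJT (jt : Jointree E J) (S : J → J → Set V) (i : J) : Set V :=
  if IsLeaf jt.T i then ⋃ X ∈ {Y : V | i ∈ jt.H Y}, famOf E X
  else ⋃ j ∈ {j : J | jt.T.Adj i j}, S i j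

/-- The width of a thinned jointree with separator assignment `S`. -/
def thWidthJT (jt : Jointree E J) (S : J → J → Set V) : ℕ :=
  (⨆ i : J, (thClusterJT jt S i).ncard) - 1

/-- The causal treewidth of the DAG `E` whose internal variables are all functional:
the minimum width attained by a thinned jointree for `E`. -/
def causalTreewidth (E : V → V → Prop) : ℕ :=
  sInf {w : ℕ | ∃ (J : Type u) (_ : Finite J) (jt : Jointree E J) (S : J → J → Set V),
    IsThinning jt S ∧ thWidthJT jt S = w}

/-- The thinned separator assignment for the twin jointree produced by Algorithm 1,
obtained from a thinned separator assignment `S` of the base jointree: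
`S^t = S` on duplicated edges, `S^t = S'` on duplicate edges, and
`S^t = S ∪ S'` on invariant edges. -/
def twinSep (jt : Jointree E J) (r : J) (S : J → J → Set V) :
    TwinJ jt r → TwinJ jt r → Set (TwinVar E)
  | Sum.inl i, Sum.inl j =>
      if Duplicated jt r i ∨ Duplicated jt r j then Sum.inl '' S i j
      else Sum.inl '' S i j ∪ twinDup E '' S i j
  | Sum.inl i, Sum.inr v => twinDup E '' S i v.1
  | Sum.inr u, Sum.inl j => twinDup E '' S u.1 j
  | Sum.inr u, Sum.inr v => twinDup E '' S u.1 v.1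

/-! ### N-world networks -/

/-- The variables of the `N`-world network of a base network with variables `V`,
with respect to a set `R` of roots: the variables in `R` (`Sum.inl`) stay unreplicated,
and each variable outside `R` is replaced by `N` duplicates (`Sum.inr`). -/
abbrev NVar (R : Set V) (N : ℕ) : Type u := {x : V // x ∈ R} ⊕ ({x : V // x ∉ R} × Fin N)

/-- The `k`-th duplicate `X^k` of variable `X`; by convention `X^k = X` when `X ∈ R`. -/
def ndup (R : Set V) (N : ℕ) (x : V) (k : Fin N) : NVar R N :=
  if h : x ∈ R then Sum.inl ⟨x, h⟩ else Sum.inr (⟨x, h⟩, k)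

/-- The edges of the `N`-world network `G^N` of the base network `E` with respect to the
set of roots `R`: a parent `P ∈ R` of `X` is a parent of every duplicate `X^k`, while a
parent `P ∉ R` of `X` yields the edges `P^k → X^k`. -/
def nEdge (E : V → V → Prop) (R : Set V) (N : ℕ) (a b : NVar R N) : Prop :=
  match a, b with
  | Sum.inl p, Sum.inr x => E p.1 x.1.1
  | Sum.inr p, Sum.inr x => E p.1.1 x.1.1 ∧ p.2 = x.2
  | _, _ => False

/-- Eliminate all `N` duplicates `x^1, …, x^N` of `x` (a single variable when `x ∈ R`). -/
def elimNBlock (R : Set V) (N : ℕ) (G : SimpleGraph (NVar R N)) (x : V) :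
    SimpleGraph (NVar R N) :=
  if h : x ∈ R then eliminate G (Sum.inl ⟨x, h⟩)
  else (List.ofFn (fun k : Fin N => (Sum.inr (⟨x, h⟩, k) : NVar R N))).foldl eliminate G

/-- The `N`-world elimination order obtained from `π`: replace each variable `x ∉ R`
by its `N` duplicates `x^1, …, x^N`. -/
def nOrder (R : Set V) (N : ℕ) (π : List V) : List (NVar R N) :=
  π.foldr (fun x acc =>
    (if h : x ∈ R then [(Sum.inl ⟨x, h⟩ : NVar R N)]
     else List.ofFn (fun k : Fin N => (Sum.inr (⟨x, h⟩, k) : NVar R N))) ++ acc) []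

/-! ### Generalized N-world networks -/

/-- The variables of a generalized `N`-world network: nodes outside the duplicated set `D`
stay unreplicated, and each node in `D` is replaced by `N` duplicates. -/
abbrev GNVar (D : Set V) (N : ℕ) : Type u := {x : V // x ∉ D} ⊕ ({x : V // x ∈ D} × Fin N)

/-- The edges of a generalized `N`-world network of the base network `E` with respect to
the duplicated set `D` and the optional extra edges `ex` between duplicates (an edge from
`X^i` to `X^j` is added when `i < j` and `ex X i j` holds). -/
def gnEdge (E : V → V → Prop) (D : Set V) (N : ℕ) (ex : V → Fin N → Fin N → Prop)
    (a b : GNVar D N) : Prop :=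
  match a, b with
  | Sum.inl p, Sum.inl x => E p.1 x.1
  | Sum.inl p, Sum.inr x => E p.1 x.1.1
  | Sum.inr p, Sum.inr x =>
      (E p.1.1 x.1.1 ∧ p.2 = x.2) ∨ (p.1.1 = x.1.1 ∧ p.2 < x.2 ∧ ex x.1.1 p.2 x.2)
  | Sum.inr _, Sum.inl _ => False


/-- The `N`-world graph sequence: the graph obtained from the moral graph of the
`N`-world network after eliminating all duplicates of the first `i` variables of `π`. -/
def nGraphAt (E : V → V → Prop) (R : Set V) (N : ℕ) (π : List V) (i : ℕ) :
    SimpleGraph (NVar R N) :=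
  (π.take i).foldl (elimNBlock R N) (moralGraph (nEdge E R N))

/-- The cluster of an `N`-world variable `Y` in the elimination process on the moral
graph of the `N`-world network induced by the `N`-world elimination order. -/
def nClusterOf (E : V → V → Prop) (R : Set V) (N : ℕ) (π : List V) (Y : NVar R N) :
    Set (NVar R N) :=
  clusterOf (nEdge E R N) (nOrder R N π) Y

end


noncomputable section AuxProof

variable {V : Type*}

/-- Projection from N-world variables to base variables. -/
def vproj (R : Set V) (N : ℕ) : NVar R N → V
  | Sum.inl x => x.1
  | Sum.inr x => x.1.1

@[simp] lemma vproj_ndup (R : Set V) (N : ℕ) (x : V) (k : Fin N) :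
    vproj R N (ndup R N x k) = x := by
  unfold ndup; split <;> rfl

/-- Pullback of a base graph to N-world variables, with fibers made complete. -/
def vlift (R : Set V) (N : ℕ) (G : SimpleGraph V) : SimpleGraph (NVar R N) where
  Adj a b := a ≠ b ∧ (vproj R N a = vproj R N b ∨ G.Adj (vproj R N a) (vproj R N b))
  symm := by
    refine ⟨?_⟩
    rintro a b ⟨h1, h2⟩
    refine ⟨h1.symm, ?_⟩
    rcases h2 with h | h
    · exact Or.inl h.symm
    · exact Or.inr h.symm
  loopless := ⟨fun a h => h.1 rfl⟩

/-- `G` with the closed neighborhood of `x` turned into a clique. -/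
def cliqueAt (G : SimpleGraph V) (x : V) : SimpleGraph V where
  Adj u w := u ≠ w ∧ (G.Adj u w ∨ (u ∈ closedNbhd G x ∧ w ∈ closedNbhd G x))
  symm := by
    refine ⟨?_⟩
    rintro u w ⟨h1, h2⟩
    refine ⟨h1.symm, ?_⟩
    rcases h2 with h | ⟨h, h'⟩
    · exact Or.inl h.symm
    · exact Or.inr ⟨h', h⟩
  loopless := ⟨fun a h => h.1 rfl⟩

lemma mem_closedNbhd {G : SimpleGraph V} {x y : V} :
    y ∈ closedNbhd G x ↔ y = x ∨ G.Adj x y := Set.mem_insert_iff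

/-- The block of duplicates of `x` in the N-world elimination order. -/
def blockL (R : Set V) (N : ℕ) (x : V) : List (NVar R N) :=
  if h : x ∈ R then [(Sum.inl ⟨x, h⟩ : NVar R N)]
  else List.ofFn (fun k : Fin N => (Sum.inr (⟨x, h⟩, k) : NVar R N))

lemma nOrder_cons (R : Set V) (N : ℕ) (x : V) (t : List V) :
    nOrder R N (x :: t) = blockL R N x ++ nOrder R N t := rfl

lemma nOrder_nil (R : Set V) (N : ℕ) : nOrder R N ([] : List V) = [] := rfl

lemma vproj_of_mem_blockL {R : Set V} {N : ℕ} {x : V} {a : NVar R N}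
    (h : a ∈ blockL R N x) : vproj R N a = x := by
  unfold blockL at h
  split at h
  · simp only [List.mem_singleton] at h; subst h; rfl
  · rw [List.mem_ofFn] at h
    obtain ⟨k, rfl⟩ := h
    rfl

lemma mem_blockL {R : Set V} {N : ℕ} {x : V} {a : NVar R N}
    (h : vproj R N a = x) : a ∈ blockL R N x := by
  cases a with
  | inl p =>
    have hx : p.1 = x := h
    subst hx
    unfold blockL
    rw [dif_pos p.2]
    simp
  | inr p =>
    have hx : p.1.1 = x := h
    subst hx
    unfold blockL
    rw [dif_neg p.1.2]
    rw [List.mem_ofFn]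
    exact ⟨p.2, rfl⟩

lemma elimList_append {α : Type*} (G : SimpleGraph α) (l1 l2 : List α) :
    elimList G (l1 ++ l2) = elimList (elimList G l1) l2 := by
  induction l1 generalizing G with
  | nil => rfl
  | cons x xs ih => exact ih (eliminate G x)

lemma isolated_eliminate {α : Type*} {H : SimpleGraph α} {a : α}
    (h : ∀ b, ¬ H.Adj a b) (z : α) : ∀ b, ¬ (eliminate H z).Adj a b := by
  intro b hb
  rcases hb.2.2.2 with h1 | ⟨h1, _⟩
  · exact h b h1
  · exact h z h1

lemma isolated_elimList {α : Type*} {H : SimpleGraph α} {a : α}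
    (h : ∀ b, ¬ H.Adj a b) (L : List α) : ∀ b, ¬ (elimList H L).Adj a b := by
  induction L generalizing H with
  | nil => exact h
  | cons x xs ih => exact ih (isolated_eliminate h x)

lemma eliminate_self_isolated {α : Type*} (H : SimpleGraph α) (a : α) :
    ∀ b, ¬ (eliminate H a).Adj a b := fun _ hb => hb.2.1 rfl

lemma vlift_mono {R : Set V} {N : ℕ} {G G' : SimpleGraph V}
    (h : ∀ u w, G.Adj u w → G'.Adj u w) :
    ∀ a b, (vlift R N G).Adj a b → (vlift R N G').Adj a b := by
  rintro a b ⟨h1, h2⟩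
  exact ⟨h1, h2.imp id (h _ _)⟩

lemma le_cliqueAt {G : SimpleGraph V} {x : V} :
    ∀ u w, G.Adj u w → (cliqueAt G x).Adj u w :=
  fun _ _ h => ⟨h.ne, Or.inl h⟩

/-- Eliminating a copy of `x` preserves being below `vlift (cliqueAt G x)`. -/
lemma block_step {R : Set V} {N : ℕ} {G : SimpleGraph V} {x : V}
    {H : SimpleGraph (NVar R N)}
    (hH : ∀ a b, H.Adj a b → (vlift R N (cliqueAt G x)).Adj a b)
    {v : NVar R N} (hv : vproj R N v = x) :
    ∀ a b, (eliminate H v).Adj a b → (vlift R N (cliqueAt G x)).Adj a b := by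
  intro a b hab
  obtain ⟨hne, _, _, hcase⟩ := hab
  rcases hcase with h | ⟨h1, h2⟩
  · exact hH a b h
  · have key : ∀ c : NVar R N, (vlift R N (cliqueAt G x)).Adj c v →
        vproj R N c ∈ closedNbhd G x := by
      intro c hc
      rcases hc.2 with he | hadj
      · rw [he, hv]; exact Set.mem_insert _ _
      · rw [hv] at hadj
        rcases hadj.2 with hg | ⟨hm, _⟩
        · exact mem_closedNbhd.2 (Or.inr hg.symm)
        · exact hm
    have ha : vproj R N a ∈ closedNbhd G x := key a (hH a v h1)
    have hb : vproj R N b ∈ closedNbhd G x :=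
      key b ((vlift R N (cliqueAt G x)).adj_symm (hH v b h2))
    refine ⟨hne, ?_⟩
    by_cases hpq : vproj R N a = vproj R N b
    · exact Or.inl hpq
    · exact Or.inr ⟨hpq, Or.inr ⟨ha, hb⟩⟩

lemma block_fold {R : Set V} {N : ℕ} {G : SimpleGraph V} {x : V}
    {H : SimpleGraph (NVar R N)} {L : List (NVar R N)}
    (hL : ∀ v ∈ L, vproj R N v = x)
    (hH : ∀ a b, H.Adj a b → (vlift R N (cliqueAt G x)).Adj a b) :
    ∀ a b, (elimList H L).Adj a b → (vlift R N (cliqueAt G x)).Adj a b := by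
  induction L generalizing H with
  | nil => exact hH
  | cons v vs ih =>
    exact ih (fun w hw => hL w (List.mem_cons_of_mem _ hw))
      (block_step hH (hL v List.mem_cons_self))

/-- Main invariant: eliminating blockwise in the N-world graph stays below the lift of
the base elimination, and all copies of eliminated variables become isolated. -/
lemma main_lem (R : Set V) (N : ℕ) :
    ∀ (L : List V) (H : SimpleGraph (NVar R N)) (G : SimpleGraph V),
    (∀ a b, H.Adj a b → (vlift R N G).Adj a b) →
    (∀ a b, (elimList H (nOrder R N L)).Adj a b → (vlift R N (elimList G L)).Adj a b)
    ∧ (∀ y ∈ L, ∀ a, vproj R N a = y → ∀ b, ¬ (elimList H (nOrder R N L)).Adj a b) := by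
  intro L
  induction L with
  | nil =>
    intro H G hH
    refine ⟨hH, ?_⟩
    intro y hy
    exact absurd hy List.not_mem_nil
  | cons y t ih =>
    intro H G hH
    have hcons : elimList H (nOrder R N (y :: t)) =
        elimList (elimList H (blockL R N y)) (nOrder R N t) := by
      rw [nOrder_cons, elimList_append]
    set H' := elimList H (blockL R N y) with hH'def
    -- H' is below vlift (cliqueAt G y)
    have hclique : ∀ a b, H'.Adj a b → (vlift R N (cliqueAt G y)).Adj a b :=
      block_fold (fun v hv => vproj_of_mem_blockL hv)
        (fun a b h => vlift_mono le_cliqueAt a b (hH a b h))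
    -- all copies of y are isolated in H'
    have hiso : ∀ a, vproj R N a = y → ∀ b, ¬ H'.Adj a b := by
      intro a ha
      obtain ⟨s, u, hdec⟩ := List.append_of_mem (mem_blockL ha)
      rw [hH'def, hdec, elimList_append]
      exact isolated_elimList (eliminate_self_isolated (elimList H s) a) u
    -- H' is below vlift (eliminate G y)
    have hH'2 : ∀ a b, H'.Adj a b → (vlift R N (eliminate G y)).Adj a b := by
      intro a b hab
      have hpa : vproj R N a ≠ y := fun h => hiso a h b hab
      have hpb : vproj R N b ≠ y := fun h => hiso b h a (H'.adj_symm hab)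
      obtain ⟨hne, hcase⟩ := hclique a b hab
      refine ⟨hne, ?_⟩
      rcases hcase with he | hadj
      · exact Or.inl he
      · refine Or.inr ⟨hadj.1, hpa, hpb, ?_⟩
        rcases hadj.2 with hg | ⟨hma, hmb⟩
        · exact Or.inl hg
        · have g1 : G.Adj y (vproj R N a) := (mem_closedNbhd.1 hma).resolve_left hpa
          have g2 : G.Adj y (vproj R N b) := (mem_closedNbhd.1 hmb).resolve_left hpb
          exact Or.inr ⟨g1.symm, g2⟩
    obtain ⟨ih1, ih2⟩ := ih H' (eliminate G y) hH'2
    constructor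
    · intro a b h
      rw [hcons] at h
      exact ih1 a b h
    · intro z hz a ha b
      rw [hcons]
      rcases List.mem_cons.1 hz with rfl | hz'
      · exact isolated_elimList (hiso a ha) _ b
      · exact ih2 z hz' a ha b

/-- Decomposing the N-world elimination order at the block of `X`.
Stated for explicitly given decidability instances so that it can be used by
unification regardless of how instances were synthesized elsewhere. -/
lemma take_nOrder (R : Set V) (N : ℕ) (X : V) (j : Fin N)
    (dV : DecidableEq V) (dN : DecidableEq (NVar R N)) :
    ∀ (L : List V), X ∈ L →
    (nOrder R N L).take (@List.idxOf _ (@instBEqOfDecidableEq _ dN)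
        (ndup R N X j) (nOrder R N L)) =
      nOrder R N (L.take (@List.idxOf _ (@instBEqOfDecidableEq _ dV) X L)) ++
        (blockL R N X).take (@List.idxOf _ (@instBEqOfDecidableEq _ dN)
          (ndup R N X j) (blockL R N X)) := by
  intro L
  induction L with
  | nil => intro h; exact absurd h List.not_mem_nil
  | cons y t ih =>
    intro hmem
    by_cases hyx : y = X
    · subst hyx
      rw [List.idxOf_cons_self, List.take_zero, nOrder_nil, List.nil_append]
      rw [nOrder_cons]
      have hmemb : ndup R N y j ∈ blockL R N y := mem_blockL (vproj_ndup R N y j)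
      letI : BEq (NVar R N) := @instBEqOfDecidableEq _ dN
      rw [List.idxOf_append_of_mem hmemb]
      exact List.take_append_of_le_length
        (le_of_lt (List.idxOf_lt_length_of_mem hmemb))
    · have hmem' : X ∈ t := by
        rcases List.mem_cons.1 hmem with h | h
        · exact absurd h.symm hyx
        · exact h
      rw [List.idxOf_cons_ne t hyx, Nat.succ_eq_add_one]
      rw [List.take_succ_cons, nOrder_cons, nOrder_cons]
      have hnot : ndup R N X j ∉ blockL R N y := by
        intro h
        have := vproj_of_mem_blockL h
        rw [vproj_ndup] at this
        exact hyx this.symm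
      letI : BEq (NVar R N) := @instBEqOfDecidableEq _ dN
      rw [List.idxOf_append_of_notMem hnot, List.take_length_add_append]
      rw [ih hmem', List.append_assoc]

/-- The moral graph of an N-world network is below the lift of the base moral graph. -/
lemma moral_nEdge_le (E : V → V → Prop) (R : Set V) (N : ℕ) :
    ∀ a b, (moralGraph (nEdge E R N)).Adj a b → (vlift R N (moralGraph E)).Adj a b := by
  have hedge : ∀ a b : NVar R N, nEdge E R N a b → E (vproj R N a) (vproj R N b) := by
    rintro (p | p) (x | x) h <;> simp only [nEdge] at h
    · exact h
    · exact h.1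
  rintro a b ⟨hne, hcase⟩
  refine ⟨hne, ?_⟩
  by_cases hpq : vproj R N a = vproj R N b
  · exact Or.inl hpq
  · refine Or.inr ⟨hpq, ?_⟩
    rcases hcase with h | h | ⟨c, h1, h2⟩
    · exact Or.inl (hedge a b h)
    · exact Or.inr (Or.inl (hedge b a h))
    · exact Or.inr (Or.inr ⟨vproj R N c, hedge a c h1, hedge b c h2⟩)

/-- Every N-world variable is a duplicate of its projection. -/
lemma exists_ndup (R : Set V) (N : ℕ) (j : Fin N) (b : NVar R N) :
    ∃ k : Fin N, ndup R N (vproj R N b) k = b := by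
  cases b with
  | inl p =>
    refine ⟨j, ?_⟩
    show ndup R N p.1 j = Sum.inl p
    unfold ndup
    rw [dif_pos p.2]
  | inr p =>
    refine ⟨p.2, ?_⟩
    show ndup R N p.1.1 p.2 = Sum.inr p
    unfold ndup
    rw [dif_neg p.1.2]

/-- The core cluster computation: after eliminating the blocks of the first `m`
variables and then part of the block of `X`, the closed neighborhood of `X^j` is
contained in the union of the copies of the closed neighborhood of `X` in the
corresponding base elimination graph. -/
lemma cluster_step (E : V → V → Prop) (R : Set V) (N : ℕ) (π : List V) (X : V)
    (j : Fin N) (m : ℕ) (pb : List (NVar R N))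
    (hpb : ∀ v ∈ pb, vproj R N v = X) (b : NVar R N)
    (hb : b ∈ closedNbhd
      (elimList (elimList (moralGraph (nEdge E R N)) (nOrder R N (π.take m))) pb)
      (ndup R N X j)) :
    b ∈ ⋃ k : Fin N, (fun y => ndup R N y k) ''
      closedNbhd (elimList (moralGraph E) (π.take m)) X := by
  have hmain := (main_lem R N (π.take m) _ _ (moral_nEdge_le E R N)).1
  have hH1 : ∀ a c,
      (elimList (elimList (moralGraph (nEdge E R N)) (nOrder R N (π.take m))) pb).Adj a c →
      (vlift R N (cliqueAt (elimList (moralGraph E) (π.take m)) X)).Adj a c :=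
    block_fold hpb (fun a c h => vlift_mono le_cliqueAt a c (hmain a c h))
  rcases Set.mem_insert_iff.1 hb with rfl | hadj
  · exact Set.mem_iUnion.2 ⟨j, ⟨X, Set.mem_insert _ _, rfl⟩⟩
  · have hlift := hH1 _ b hadj
    have hprojb : vproj R N b ∈ closedNbhd (elimList (moralGraph E) (π.take m)) X := by
      rcases hlift.2 with he | hcl
      · rw [vproj_ndup] at he
        rw [← he]
        exact Set.mem_insert _ _
      · rw [vproj_ndup] at hcl
        rcases hcl.2 with hg | ⟨_, hm⟩
        · exact mem_closedNbhd.2 (Or.inr hg)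
        · exact hm
    obtain ⟨k, hk⟩ := exists_ndup R N j b
    exact Set.mem_iUnion.2 ⟨k, ⟨vproj R N b, hprojb, hk⟩⟩

end AuxProof

/-- the cluster of `X^j` under the `N`-world elimination order is contained
in the union of the `N` copies of the cluster of `X`. -/
theorem nworld_cluster_subset {V : Type*} [Fintype V]
    (E : V → V → Prop) (hE : IsAcyclicRel E)
    (R : Set V) (hR : ∀ x ∈ R, isRoot E x) (N : ℕ) (hN : 1 ≤ N)
    (π : List V) (hπ : IsElimOrder π) (X : V) (j : Fin N) :
    nClusterOf E R N π (ndup R N X j) ⊆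
      ⋃ k : Fin N, (fun y => ndup R N y k) '' clusterOf E π X := by
  intro b hb
  have hXπ : X ∈ π := hπ.2 X
  unfold nClusterOf clusterOf graphAt at hb
  rw [take_nOrder R N X j (fun a b => Classical.propDecidable _)
      (fun a b => Classical.propDecidable _) π hXπ, elimList_append] at hb
  exact cluster_step E R N π X j _ _
    (fun v hv => vproj_of_mem_blockL (List.mem_of_mem_take hv)) b hb

end Counterfactual
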